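/- arXiv:2206.11756 — 2 statements merged into one kernel-verified Lean document; each statement's English description precedes it below -/
import Mathlib

section
/- Let p, q ∈ ℕ be primes with 2 < q < p, and let x₁, x₂ ∈ ℤ. Then, in the symmetric group S_p, both equalities [p]^{−x₂}[q]^{x₁}([p][q])^{x₂} = [q] and [q]^{x₁}[p]^{−x₂}([p][q])^{x₂} = [q] hold if and only if either (x₁ ≡ 1 mod q and x₂ ≡ 0 mod p) or (x₁ ≡ 0 mod q and x₂ ≡ 1 mod p). -/
/-!
Write `Q = [q]`, `P = [p]` and `C = [p][q]`. Since `q` is odd, `C` is a `p`-cycle, so `P` and `C`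
have prime order `p`, `Q` has prime order `q`, and `P`, `Q` do not commute. The two equations
together say that `Q^{x₁}` commutes with `P^{-x₂}`; as a nontrivial power of an element of prime
order generates the same cyclic group, `q ∣ x₁` or `p ∣ x₂`. If `p ∣ x₂`, the equations reduce to
`Q^{x₁} = Q`. If `q ∣ x₁`, they reduce to `C^{x₂ - 1} = P^{x₂ - 1}`, which forces `p ∣ x₂ - 1`,
since otherwise `C = P` and `Q = 1`.
-/

/-- The cyclic permutation `[n] = (1,2,…,n)` considered as an element of the symmetric
group `S_p` on the `p` points `{0,…,p-1}` (written 0-indexed): it maps `i ↦ i + 1` for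
`i < n - 1`, maps `n - 1 ↦ 0` and fixes all points `n, …, p - 1`. -/
def cyc (p n : ℕ) : Equiv.Perm (Fin p) :=
  if h : n - 1 < p then Fin.cycleRange ⟨n - 1, h⟩ else 1

theorem Int.exists_mul_modEq_one_of_prime {p : ℕ} (hp : p.Prime) {k : ℤ} (hk : ¬ (p : ℤ) ∣ k) :
    ∃ u : ℤ, k * u ≡ 1 [ZMOD p] := by
  obtain ⟨a, u, h⟩ := ((Nat.prime_iff_prime_int.mp hp).coprime_iff_not_dvd).mpr hk
  exact ⟨u, Int.modEq_iff_dvd.mpr ⟨a, by linarith⟩⟩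

section Group

variable {G : Type*} [Group G]

theorem zpow_zpow_eq_self_of_mul_modEq_one {g : G} {k u : ℤ} (h : k * u ≡ 1 [ZMOD orderOf g]) :
    (g ^ k) ^ u = g := by
  rw [← zpow_mul, zpow_eq_zpow_iff_modEq.mpr h, zpow_one]

theorem Commute.of_zpow_of_orderOf_prime {g h : G} {a b : ℤ} (hg : (orderOf g).Prime)
    (hh : (orderOf h).Prime) (ha : ¬ (orderOf g : ℤ) ∣ a) (hb : ¬ (orderOf h : ℤ) ∣ b)
    (hc : Commute (g ^ a) (h ^ b)) : Commute g h := by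
  obtain ⟨u, hu⟩ := Int.exists_mul_modEq_one_of_prime hg ha
  obtain ⟨v, hv⟩ := Int.exists_mul_modEq_one_of_prime hh hb
  simpa only [zpow_zpow_eq_self_of_mul_modEq_one hu, zpow_zpow_eq_self_of_mul_modEq_one hv]
    using (hc.zpow_left u).zpow_right v

theorem eq_of_zpow_eq_zpow_of_orderOf_eq_prime {g h : G} {p : ℕ} (hp : p.Prime)
    (hg : orderOf g = p) (hh : orderOf h = p) {k : ℤ} (hk : ¬ (p : ℤ) ∣ k)
    (hgh : g ^ k = h ^ k) : g = h := by
  obtain ⟨u, hu⟩ := Int.exists_mul_modEq_one_of_prime hp hk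
  calc g = (g ^ k) ^ u := (zpow_zpow_eq_self_of_mul_modEq_one (hg ▸ hu)).symm
    _ = (h ^ k) ^ u := by rw [hgh]
    _ = h := zpow_zpow_eq_self_of_mul_modEq_one (hh ▸ hu)

variable {P Q : G} {p q : ℕ}

theorem modEq_one_of_mul_zpow_mul_zpow_neg_eq (hp : p.Prime) (hP : orderOf P = p)
    (hQP : orderOf (Q * P) = p) (hQ : Q ≠ 1) {x : ℤ} (h : (Q * P) ^ x * P ^ (-x) = Q) :
    x ≡ 1 [ZMOD p] := by
  have hx : (Q * P) ^ (x - 1) = P ^ (x - 1) := by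
    have h' : (Q * P) ^ x = Q * P ^ x := mul_inv_eq_iff_eq_mul.mp (by rwa [← zpow_neg])
    rw [sub_eq_neg_add, zpow_add, zpow_add, h', zpow_neg_one, zpow_neg_one, mul_inv_rev]
    group
  by_contra hx1
  have hdvd : ¬ (p : ℤ) ∣ x - 1 := fun hd => hx1 (Int.ModEq.symm (Int.modEq_iff_dvd.mpr hd))
  exact hQ (mul_eq_right.mp (eq_of_zpow_eq_zpow_of_orderOf_eq_prime hp hQP hP hdvd hx))

theorem zpow_equations_iff_of_orderOf_prime (hp : p.Prime) (hq : q.Prime) (hP : orderOf P = p)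
    (hQ : orderOf Q = q) (hQP : orderOf (Q * P) = p) (hcomm : ¬ Commute Q P) (x₁ x₂ : ℤ) :
    ((Q * P) ^ x₂ * Q ^ x₁ * P ^ (-x₂) = Q ∧ (Q * P) ^ x₂ * P ^ (-x₂) * Q ^ x₁ = Q) ↔
      ((x₁ ≡ 1 [ZMOD q] ∧ x₂ ≡ 0 [ZMOD p]) ∨ (x₁ ≡ 0 [ZMOD q] ∧ x₂ ≡ 1 [ZMOD p])) := by
  have hQpow {x y : ℤ} : Q ^ x = Q ^ y ↔ x ≡ y [ZMOD q] := hQ ▸ zpow_eq_zpow_iff_modEq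
  have hPpow {x y : ℤ} : P ^ x = P ^ y ↔ x ≡ y [ZMOD p] := hP ▸ zpow_eq_zpow_iff_modEq
  have hQPpow {x y : ℤ} : (Q * P) ^ x = (Q * P) ^ y ↔ x ≡ y [ZMOD p] :=
    hQP ▸ zpow_eq_zpow_iff_modEq
  constructor
  · rintro ⟨h₁, h₂⟩
    have hc : Commute (Q ^ x₁) (P ^ (-x₂)) := by
      rw [mul_assoc] at h₁ h₂
      exact mul_left_cancel (h₁.trans h₂.symm)
    by_cases hx₁ : (q : ℤ) ∣ x₁
    · have hQ1 : Q ^ x₁ = 1 := by simpa using hQpow.mpr (Int.modEq_zero_iff_dvd.mpr hx₁)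
      rw [hQ1, mul_one] at h₂
      have hQne : Q ≠ 1 := by rintro rfl; exact hcomm (Commute.one_left P)
      exact Or.inr ⟨Int.modEq_zero_iff_dvd.mpr hx₁,
        modEq_one_of_mul_zpow_mul_zpow_neg_eq hp hP hQP hQne h₂⟩
    · have hx₂ : x₂ ≡ 0 [ZMOD p] := by
        refine Int.modEq_zero_iff_dvd.mpr (by_contra fun hx₂ => hcomm ?_)
        refine .of_zpow_of_orderOf_prime (hQ ▸ hq) (hP ▸ hp) (hQ ▸ hx₁) ?_ hc
        rwa [hP, dvd_neg]
      rw [hQPpow.mpr hx₂, hPpow.mpr hx₂.neg] at h₁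
      exact Or.inl ⟨hQpow.mp (by simpa using h₁), hx₂⟩
  · rintro (⟨h₁, h₂⟩ | ⟨h₁, h₂⟩)
    · rw [hQpow.mpr h₁, hPpow.mpr h₂.neg, hQPpow.mpr h₂]
      constructor <;> group
    · rw [hQpow.mpr h₁, hPpow.mpr h₂.neg, hQPpow.mpr h₂]
      constructor <;> group

end Group

section Cyc

variable {p n q : ℕ}

theorem val_cyc_apply (hn : 1 ≤ n) (hnp : n ≤ p) (j : Fin p) :
    (cyc p n j : ℕ) =
      if (j : ℕ) + 1 < n then (j : ℕ) + 1 else if (j : ℕ) + 1 = n then 0 else j := by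
  have : NeZero p := ⟨by omega⟩
  rw [cyc, dif_pos (by omega)]
  rcases lt_trichotomy (j : ℕ) (n - 1) with h | h | h
  · rw [Fin.coe_cycleRange_of_lt (show j < ⟨n - 1, _⟩ from h), if_pos (by omega)]
  · rw [Fin.cycleRange_of_eq (Fin.ext h), if_neg (by omega), if_pos (by omega), Fin.val_zero]
  · rw [Fin.cycleRange_of_gt (show ⟨n - 1, _⟩ < j from h), if_neg (by omega), if_neg (by omega)]

theorem orderOf_cyc (hn : 2 ≤ n) (hnp : n ≤ p) : orderOf (cyc p n) = n := by
  have : NeZero p := ⟨by omega⟩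
  rw [cyc, dif_pos (by omega), ← Equiv.Perm.lcm_cycleType,
    Fin.cycleType_cycleRange (Fin.ne_of_val_ne (by simp; omega))]
  simp only [Multiset.lcm_singleton, normalize_eq]
  omega

theorem val_cyc_mul_cyc_apply (hq : 2 ≤ q) (hqp : q ≤ p) (j : Fin p) :
    ((cyc p q * cyc p p) j : ℕ) =
      if (j : ℕ) + 2 < q then (j : ℕ) + 2 else if (j : ℕ) + 2 = q then 0
      else if (j : ℕ) + 1 < p then (j : ℕ) + 1 else 1 := by
  rw [Equiv.Perm.mul_apply, val_cyc_apply (by omega) hqp, val_cyc_apply (by omega) le_rfl]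
  have := j.isLt
  split_ifs <;> omega

theorem not_commute_cyc (hq : 2 ≤ q) (hqp : q < p) : ¬ Commute (cyc p q) (cyc p p) := by
  intro h
  have hQP : ((cyc p q * cyc p p) ⟨q - 1, by omega⟩ : ℕ) = q := by
    rw [val_cyc_mul_cyc_apply hq hqp.le, Fin.val_mk]
    split_ifs <;> omega
  have hPQ : ((cyc p p * cyc p q) ⟨q - 1, by omega⟩ : ℕ) = 1 := by
    rw [Equiv.Perm.mul_apply, val_cyc_apply (by omega) le_rfl, val_cyc_apply (by omega) hqp.le,
      Fin.val_mk]
    split_ifs <;> omega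
  rw [h.eq] at hQP
  omega

/-- The points of `Fin p` in the order in which the `p`-cycle `[p][q]` visits them when `q` is
odd: `0, 2, …, q - 1, q, q + 1, …, p - 1, 1, 3, …, q - 2`. -/
def cycMulCycOrbit (p q k : ℕ) : ℕ :=
  if k ≤ q / 2 then 2 * k else if k < p - q / 2 then k + q / 2 else 2 * (k + q / 2 - p) + 1

theorem val_cyc_mul_cyc_pow_apply_zero (hq : Odd q) (h1q : 1 < q) (hqp : q ≤ p) {k : ℕ}
    (hk : k < p) : (((cyc p q * cyc p p) ^ k) ⟨0, by omega⟩ : ℕ) = cycMulCycOrbit p q k := by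
  obtain ⟨m, rfl⟩ := hq
  induction k with
  | zero => rfl
  | succ k ih =>
    rw [pow_succ', Equiv.Perm.mul_apply, val_cyc_mul_cyc_apply (by omega) hqp, ih (by omega)]
    unfold cycMulCycOrbit
    split_ifs <;> omega

theorem exists_cycMulCycOrbit_eq (hq : Odd q) (hqp : q ≤ p) {j : ℕ} (hj : j < p) :
    ∃ k < p, cycMulCycOrbit p q k = j := by
  obtain ⟨m, rfl⟩ := hq
  unfold cycMulCycOrbit
  rcases Nat.even_or_odd j with ⟨i, rfl⟩ | ⟨i, rfl⟩
  · by_cases h : i + i ≤ 2 * m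
    · exact ⟨i, by omega, by split_ifs <;> omega⟩
    · exact ⟨i + i - m, by omega, by split_ifs <;> omega⟩
  · by_cases h : 2 * i + 1 < 2 * m
    · exact ⟨p - m + i, by omega, by split_ifs <;> omega⟩
    · exact ⟨2 * i + 1 - m, by omega, by split_ifs <;> omega⟩

theorem support_cyc_mul_cyc (hq : 3 ≤ q) (hqp : q ≤ p) :
    (cyc p q * cyc p p).support = Finset.univ := by
  refine Finset.eq_univ_of_forall fun j => Equiv.Perm.mem_support.mpr fun h => ?_
  have hj := congrArg Fin.val h
  rw [val_cyc_mul_cyc_apply (by omega) hqp] at hj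
  have := j.isLt
  split_ifs at hj <;> omega

theorem isCycle_cyc_mul_cyc (hq : Odd q) (h3q : 3 ≤ q) (hqp : q ≤ p) :
    (cyc p q * cyc p p).IsCycle := by
  refine ⟨⟨0, by omega⟩, ?_, fun y _ => ?_⟩
  · exact Equiv.Perm.mem_support.mp (support_cyc_mul_cyc h3q hqp ▸ Finset.mem_univ _)
  · obtain ⟨k, hk, hky⟩ := exists_cycMulCycOrbit_eq hq hqp y.isLt
    refine ⟨k, Fin.ext ?_⟩
    rw [zpow_natCast, val_cyc_mul_cyc_pow_apply_zero hq (by omega) hqp hk, hky]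

theorem orderOf_cyc_mul_cyc (hq : Odd q) (h3q : 3 ≤ q) (hqp : q ≤ p) :
    orderOf (cyc p q * cyc p p) = p := by
  rw [(isCycle_cyc_mul_cyc hq h3q hqp).orderOf, support_cyc_mul_cyc h3q hqp, Finset.card_univ,
    Fintype.card_fin]

end Cyc

/-- Let `p, q` be primes with `2 < q < p` and `x₁, x₂ ∈ ℤ`. In `S_p`
the two equalities `[p]^{−x₂}[q]^{x₁}([p][q])^{x₂} = [q]` and
`[q]^{x₁}[p]^{−x₂}([p][q])^{x₂} = [q]` (products taken left to right, so a paper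
product `a b` is `b * a` in Mathlib's convention `(f * g) x = f (g x)`) both hold
if and only if either (`x₁ ≡ 1 mod q` and `x₂ ≡ 0 mod p`) or
(`x₁ ≡ 0 mod q` and `x₂ ≡ 1 mod p`). -/
theorem cyc_equation_iff (p q : ℕ) (hp : p.Prime) (hq : q.Prime) (h2q : 2 < q)
    (hqp : q < p) (x₁ x₂ : ℤ) :
    ((cyc p q * cyc p p) ^ x₂ * (cyc p q) ^ x₁ * (cyc p p) ^ (-x₂) = cyc p q ∧
     (cyc p q * cyc p p) ^ x₂ * (cyc p p) ^ (-x₂) * (cyc p q) ^ x₁ = cyc p q) ↔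
    ((x₁ ≡ 1 [ZMOD (q : ℤ)] ∧ x₂ ≡ 0 [ZMOD (p : ℤ)]) ∨
     (x₁ ≡ 0 [ZMOD (q : ℤ)] ∧ x₂ ≡ 1 [ZMOD (p : ℤ)])) := by
  have hq_odd : Odd q := hq.odd_of_ne_two h2q.ne'
  exact zpow_equations_iff_of_orderOf_prime hp hq (orderOf_cyc hp.two_le le_rfl)
    (orderOf_cyc hq.two_le hqp.le) (orderOf_cyc_mul_cyc hq_odd h2q hqp.le)
    (not_commute_cyc hq.two_le hqp) x₁ x₂
end

section
/- Let p be a prime, let q be odd with 1 < q < p, and let x ∈ ℤ. If [p]^x = ([p][q])^x holds in the symmetric group S_p, then x ≡ 0 (mod p). -/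
open Equiv Equiv.Perm

theorem cyc_self (p : ℕ) : cyc p p = finRotate p := by
  cases p with
  | zero => rfl
  | succ m =>
    rw [cyc, dif_pos (by omega)]
    exact Fin.cycleRange_last m

theorem orderOf_finRotate (n : ℕ) : orderOf (finRotate (n + 2)) = n + 2 := by
  rw [isCycle_finRotate.orderOf, support_finRotate, Finset.card_univ, Fintype.card_fin]

theorem not_commute_finRotate_cyc {p q : ℕ} (h1q : 1 < q) (hqp : q < p) :
    ¬ Commute (finRotate p) (cyc p q) := by
  obtain ⟨m, rfl⟩ : ∃ m, p = m + 1 := ⟨p - 1, by omega⟩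
  intro h
  have hcyc : cyc (m + 1) q = Fin.cycleRange ⟨q - 1, by omega⟩ := dif_pos (by omega)
  have hrot : finRotate (m + 1) ⟨q - 1, by omega⟩ = ⟨q, hqp⟩ := by
    rw [finRotate_of_lt (by omega : q - 1 < m)]
    congr 1
    omega
  have h1eq := DFunLike.congr_fun h.eq ⟨q - 1, by omega⟩
  rw [hcyc, Perm.mul_apply, Perm.mul_apply, Fin.cycleRange_self, finRotate_apply_zero, hrot,
    Fin.cycleRange_of_gt (Fin.mk_lt_mk.mpr (by omega))] at h1eq
  have h1 : (1 : Fin (m + 1)).val = 1 := by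
    rw [Fin.val_one', Nat.mod_eq_of_lt (by omega)]
  rw [Fin.ext_iff, h1, Fin.val_mk] at h1eq
  omega

theorem Commute.of_zpow_eq_zpow {G : Type*} [Group G] {g h : G} {x : ℤ}
    (hx : x.gcd (orderOf g) = 1) (hgh : g ^ x = h ^ x) : Commute g h := by
  obtain ⟨k, hk⟩ := Subgroup.mem_zpowers_iff.mp (mem_zpowers_zpow_iff.mpr hx)
  rw [← hk, hgh]
  exact ((Commute.refl h).zpow_left x).zpow_left k

theorem cyc_pow_eq_imp_modEq_general (p q : ℕ) (hp : p.Prime) (h1q : 1 < q)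
    (hqp : q < p) (x : ℤ)
    (heq : (cyc p p) ^ x = (cyc p q * cyc p p) ^ x) :
    x ≡ 0 [ZMOD (p : ℤ)] := by
  rw [Int.modEq_zero_iff_dvd]
  by_contra hx
  obtain ⟨n, rfl⟩ : ∃ n, p = n + 2 := ⟨p - 2, by have := hp.two_le; omega⟩
  have hgcd : x.gcd (orderOf (cyc (n + 2) (n + 2))) = 1 := by
    rw [cyc_self, orderOf_finRotate, Int.gcd_comm, ← Int.isCoprime_iff_gcd_eq_one]
    exact (Nat.prime_iff_prime_int.mp hp).coprime_iff_not_dvd.mpr hx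
  have hcomm := Commute.of_zpow_eq_zpow hgcd heq
  rw [cyc_self] at hcomm
  exact not_commute_finRotate_cyc h1q hqp
    (by simpa using hcomm.mul_right (Commute.refl _).inv_right)

/-- Let `p` be a prime, `q` odd with `1 < q < p`, and `x ∈ ℤ`.
If `[p]^x = ([p][q])^x` holds in `S_p` (products taken left to right, so the paper
product `[p][q]` is `cyc p q * cyc p p` in Mathlib's convention
`(f * g) x = f (g x)`), then `x ≡ 0 (mod p)`. -/
theorem cyc_pow_eq_imp_modEq (p q : ℕ) (hp : p.Prime) (hq_odd : Odd q) (h1q : 1 < q)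
    (hqp : q < p) (x : ℤ)
    (heq : (cyc p p) ^ x = (cyc p q * cyc p p) ^ x) :
    x ≡ 0 [ZMOD (p : ℤ)] :=
  cyc_pow_eq_imp_modEq_general p q hp h1q hqp x heq
end
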